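/- arXiv:1801.10152 — 2 statements merged into one kernel-verified Lean document; each statement's English description precedes it below -/
import Mathlib

section
/- Consider a finite-horizon discrete-time Markov decision process with horizon T (a natural number), a finite nonempty state space S, a finite nonempty action space A, stage cost functions r : Fin T → S → A → ℝ, transition kernels P : Fin T → S → A → PMF S, and terminal cost g : S → ℝ. Define the backward-induction value functions V : Fin (T+1) → S → ℝ by V_T(s) = g(s) and, for t < T, V_t(s) = min over a ∈ A of ( r_t(s,a) + Σ_{s' ∈ S} (P_t(s,a))(s') · V_{t+1}(s') ). Then for every Markov policy π : Fin T → S → A and every time t ≤ T and state s, the expected total cost of following π from time t in state s, namely E[ Σ_{k=t}^{T-1} r_k(s_k, π_k(s_k)) + g(s_T) ] where s_t = s and s_{k+1} ~ P_k(s_k, π_k(s_k)), is greater than or equal to V_t(s). -/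
/-- For a finite-horizon discrete-time MDP with horizon `T`, finite
nonempty state space `S`, finite nonempty action space `A`, stage costs `r`, transition
kernels `P`, and terminal cost `g`, let `V` be the backward-induction value functions:
`V T = g` and `V t s = min_{a} ( r t s a + ∑ s', (P t s a) s' • V (t+1) s' )` for `t < T`.
Then for every Markov policy `π` and its expected cost-to-go `J` (characterized by the
backward recursion `J T = g`, `J t s = r t s (π t s) + ∑ s', (P t s (π t s)) s' • J (t+1) s'`,
which expresses the expectation over the finite state space as a finite sum weighted by the
transition probabilities), we have `V t s ≤ J t s` for all `t ≤ T` and all states `s`. -/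
theorem value_function_is_lower_bound
    (T : ℕ) (S A : Type) [Fintype S] [Nonempty S] [Fintype A] [Nonempty A]
    (r : Fin T → S → A → ℝ) (P : Fin T → S → A → PMF S) (g : S → ℝ)
    (V : Fin (T + 1) → S → ℝ)
    (hVT : ∀ s : S, V (Fin.last T) s = g s)
    (hV : ∀ (t : Fin T) (s : S),
      V t.castSucc s
        = Finset.univ.inf' Finset.univ_nonempty
            (fun a : A => r t s a + ∑ s' : S, ((P t s a) s').toReal * V t.succ s'))
    (π : Fin T → S → A)
    (J : Fin (T + 1) → S → ℝ)
    (hJT : ∀ s : S, J (Fin.last T) s = g s)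
    (hJ : ∀ (t : Fin T) (s : S),
      J t.castSucc s
        = r t s (π t s) + ∑ s' : S, ((P t s (π t s)) s').toReal * J t.succ s') :
    ∀ (t : Fin (T + 1)) (s : S), V t s ≤ J t s := by
  intro t
  induction t using Fin.reverseInduction with
  | last => intro s; rw [hVT, hJT]
  | cast t ih =>
    intro s
    rw [hV, hJ]
    refine le_trans (Finset.inf'_le _ (Finset.mem_univ (π t s))) ?_
    gcongr with s' _
    · exact ih s'
end

section
/- (Optimality of the dynamic-programming policy, Theorem 1.) Consider a finite-horizon discrete-time Markov decision process with horizon T, finite nonempty state space S, finite nonempty action space A, stage costs r : Fin T → S → A → ℝ, transition kernels P : Fin T → S → A → PMF S, and terminal cost g : S → ℝ. Let π* be a policy such that for every t < T and state s, π*_t(s) minimizes a ↦ r_t(s,a) + Σ_{s'} (P_t(s,a))(s') · V_{t+1}(s'), where V is the backward-induction value function (V_T = g, V_t(s) = min over a of that same expression). Then π* is an optimal policy: for every initial state s, the expected total cost E[ Σ_{t=0}^{T-1} r_t(s_t, π*_t(s_t)) + g(s_T) ] of following π* from time 0 in state s is less than or equal to the expected total cost of following any other Markov policy π : Fin T → S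 → A from time 0 in state s. -/
/-!
Backward induction on `t` gives two facts. The cost-to-go of `πs` solves the same backward
recursion as `V` (this is what `hopt` says), and that recursion has a unique solution, so
`Jstar = V`. For any other policy `π`, `V t ≤ J t`: the minimum defining `V t s` is at most
the value of the action `π t s` against `V (t+1)`, which is at most its value against
`J (t+1)` because expectations under a PMF are monotone.
-/

open Finset

namespace FiniteHorizonMDP

variable {T : ℕ} {S A : Type*} [Fintype S]

/-- The one-step lookahead cost of action `a` in state `s` at time `t`, with continuation
values `W` at time `t + 1`. -/
noncomputable def qValue (r : Fin T → S → A → ℝ) (P : Fin T → S → A → PMF S) (t : Fin T)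
    (W : S → ℝ) (s : S) (a : A) : ℝ :=
  r t s a + ∑ s', (P t s a s').toReal * W s'

theorem qValue_mono (r : Fin T → S → A → ℝ) (P : Fin T → S → A → PMF S) (t : Fin T)
    {W W' : S → ℝ} (h : ∀ s, W s ≤ W' s) (s : S) (a : A) :
    qValue r P t W s a ≤ qValue r P t W' s a :=
  add_le_add_right (sum_le_sum fun s' _ =>
    mul_le_mul_of_nonneg_left (h s') ENNReal.toReal_nonneg) _

theorem costToGo_unique (r : Fin T → S → A → ℝ) (P : Fin T → S → A → PMF S) (g : S → ℝ)
    (π : Fin T → S → A) {W W' : Fin (T + 1) → S → ℝ}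
    (hWT : ∀ s, W (Fin.last T) s = g s) (hW'T : ∀ s, W' (Fin.last T) s = g s)
    (hW : ∀ t s, W t.castSucc s = qValue r P t (W t.succ) s (π t s))
    (hW' : ∀ t s, W' t.castSucc s = qValue r P t (W' t.succ) s (π t s)) :
    W = W' := by
  funext t s
  induction t using Fin.reverseInduction generalizing s with
  | last => rw [hWT, hW'T]
  | cast t ih => rw [hW, hW', funext ih]

theorem value_le_costToGo [Fintype A] [Nonempty A] (r : Fin T → S → A → ℝ)
    (P : Fin T → S → A → PMF S) (g : S → ℝ) (π : Fin T → S → A) {V J : Fin (T + 1) → S → ℝ}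
    (hVT : ∀ s, V (Fin.last T) s = g s)
    (hV : ∀ t s, V t.castSucc s = univ.inf' univ_nonempty (qValue r P t (V t.succ) s))
    (hJT : ∀ s, J (Fin.last T) s = g s)
    (hJ : ∀ t s, J t.castSucc s = qValue r P t (J t.succ) s (π t s)) :
    ∀ t s, V t s ≤ J t s := by
  intro t
  induction t using Fin.reverseInduction with
  | last => intro s; rw [hVT, hJT]
  | cast t ih =>
    intro s
    calc V t.castSucc s ≤ qValue r P t (V t.succ) s (π t s) := by
          rw [hV]; exact inf'_le _ (mem_univ _)
      _ ≤ qValue r P t (J t.succ) s (π t s) := qValue_mono r P t ih s _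
      _ = J t.castSucc s := (hJ t s).symm

end FiniteHorizonMDP

theorem dp_policy_optimal_general
    (T : ℕ) (S A : Type) [Fintype S] [Fintype A] [Nonempty A]
    (r : Fin T → S → A → ℝ) (P : Fin T → S → A → PMF S) (g : S → ℝ)
    (V : Fin (T + 1) → S → ℝ)
    (hVT : ∀ s : S, V (Fin.last T) s = g s)
    (hV : ∀ (t : Fin T) (s : S),
      V t.castSucc s
        = Finset.univ.inf' Finset.univ_nonempty
            (fun a : A => r t s a + ∑ s' : S, ((P t s a) s').toReal * V t.succ s'))
    (πs : Fin T → S → A)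
    (hopt : ∀ (t : Fin T) (s : S),
      r t s (πs t s) + ∑ s' : S, ((P t s (πs t s)) s').toReal * V t.succ s'
        = V t.castSucc s)
    (Jstar : Fin (T + 1) → S → ℝ)
    (hJstarT : ∀ s : S, Jstar (Fin.last T) s = g s)
    (hJstar : ∀ (t : Fin T) (s : S),
      Jstar t.castSucc s
        = r t s (πs t s) + ∑ s' : S, ((P t s (πs t s)) s').toReal * Jstar t.succ s')
    (π : Fin T → S → A)
    (J : Fin (T + 1) → S → ℝ)
    (hJT : ∀ s : S, J (Fin.last T) s = g s)
    (hJ : ∀ (t : Fin T) (s : S),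
      J t.castSucc s
        = r t s (π t s) + ∑ s' : S, ((P t s (π t s)) s').toReal * J t.succ s') :
    ∀ s : S, Jstar 0 s ≤ J 0 s := by
  have hJstar_eq_V : Jstar = V :=
    FiniteHorizonMDP.costToGo_unique r P g πs hJstarT hVT hJstar fun t s => (hopt t s).symm
  rw [hJstar_eq_V]
  exact FiniteHorizonMDP.value_le_costToGo r P g π hVT hV hJT hJ 0

/-- **Optimality of the dynamic-programming policy, Theorem 1.**
For a finite-horizon discrete-time MDP with horizon `T`, finite nonempty state space `S`,
finite nonempty action space `A`, stage costs `r`, transition kernels `P`, and terminal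
cost `g`, let `V` be the backward-induction value functions (`V T = g`,
`V t s = min_{a} ( r t s a + ∑ s', (P t s a) s' • V (t+1) s' )`), and let `πs` be a policy
attaining the minimum in the definition of `V t s` for every `t < T` and state `s`.
Then `πs` is optimal: for every initial state `s`, the expected total cost `Jstar 0 s` of
following `πs` from time `0` in state `s` is at most the expected total cost `J 0 s` of
following any other Markov policy `π` from time `0` in state `s` (the expected costs-to-go
`Jstar`, `J` are characterized by the backward recursions expressing the expectations as
finite sums weighted by the transition probabilities). -/
theorem dp_policy_optimal
    (T : ℕ) (S A : Type) [Fintype S] [Nonempty S] [Fintype A] [Nonempty A]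
    (r : Fin T → S → A → ℝ) (P : Fin T → S → A → PMF S) (g : S → ℝ)
    (V : Fin (T + 1) → S → ℝ)
    (hVT : ∀ s : S, V (Fin.last T) s = g s)
    (hV : ∀ (t : Fin T) (s : S),
      V t.castSucc s
        = Finset.univ.inf' Finset.univ_nonempty
            (fun a : A => r t s a + ∑ s' : S, ((P t s a) s').toReal * V t.succ s'))
    (πs : Fin T → S → A)
    (hopt : ∀ (t : Fin T) (s : S),
      r t s (πs t s) + ∑ s' : S, ((P t s (πs t s)) s').toReal * V t.succ s'
        = V t.castSucc s)
    (Jstar : Fin (T + 1) → S → ℝ)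
    (hJstarT : ∀ s : S, Jstar (Fin.last T) s = g s)
    (hJstar : ∀ (t : Fin T) (s : S),
      Jstar t.castSucc s
        = r t s (πs t s) + ∑ s' : S, ((P t s (πs t s)) s').toReal * Jstar t.succ s')
    (π : Fin T → S → A)
    (J : Fin (T + 1) → S → ℝ)
    (hJT : ∀ s : S, J (Fin.last T) s = g s)
    (hJ : ∀ (t : Fin T) (s : S),
      J t.castSucc s
        = r t s (π t s) + ∑ s' : S, ((P t s (π t s)) s').toReal * J t.succ s') :
    ∀ s : S, Jstar 0 s ≤ J 0 s :=
  dp_policy_optimal_general T S A r P g V hVT hV πs hopt Jstar hJstarT hJstar π J hJT hJ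
end
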